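/- Let M, N be positive sequences with M 0 = N 0 = 1, both satisfying (M.1), with (M p)^(1/p) → ∞ and (N p)^(1/p) → ∞. Then N ⊂ M (i.e., there exist C, L > 0 with N p ≤ C L^p M p for all p) if and only if there exist C', L' > 0 with ω_M(t) ≤ ω_N(L' t) + log C' for all t ≥ 0. -/
import Mathlib


open Filter

/-- The associated function `ω_M(t) = sup_{p} log(t^p / M p)`. -/
noncomputable def assocFun (M : ℕ → ℝ) (t : ℝ) : ℝ :=
  ⨆ p : ℕ, Real.log (t ^ p / M p)

lemma bddAbove_range_of_eventually {f : ℕ → ℝ} {c : ℝ} {K : ℕ}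
    (h : ∀ q, K ≤ q → f q ≤ c) : BddAbove (Set.range f) := by
  refine ⟨|c| + ∑ i ∈ Finset.range K, |f i|, ?_⟩
  rintro x ⟨q, rfl⟩
  have hsum : (0:ℝ) ≤ ∑ i ∈ Finset.range K, |f i| :=
    Finset.sum_nonneg fun i _ => abs_nonneg _
  by_cases hq : K ≤ q
  · have h1 : f q ≤ c := h q hq
    have h2 : c ≤ |c| := le_abs_self c
    linarith
  · push_neg at hq
    have h1 : |f q| ≤ ∑ i ∈ Finset.range K, |f i| :=
      Finset.single_le_sum (f := fun i => |f i|) (fun i _ => abs_nonneg _)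
        (Finset.mem_range.mpr hq)
    have h2 : f q ≤ |f q| := le_abs_self _
    have h3 : (0:ℝ) ≤ |c| := abs_nonneg _
    linarith

lemma bddAbove_assoc_aux {M : ℕ → ℝ} (hMpos : ∀ p, 0 < M p)
    (hMlim : Tendsto (fun p : ℕ => (M p) ^ ((p : ℝ)⁻¹)) atTop atTop)
    {s : ℝ} (hs : 0 ≤ s) :
    BddAbove (Set.range fun p : ℕ => Real.log (s ^ p / M p)) := by
  obtain ⟨K, hK⟩ := (hMlim.eventually_ge_atTop (s + 1)).exists_forall_of_atTop
  apply bddAbove_range_of_eventually (c := 0) (K := max K 1)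
  intro q hq
  have hq1 : 1 ≤ q := le_trans (le_max_right _ _) hq
  have hqK : K ≤ q := le_trans (le_max_left _ _) hq
  have hq0 : (q : ℝ) ≠ 0 := by positivity
  have h1 : (s + 1) ^ (q : ℝ) ≤ ((M q) ^ ((q : ℝ)⁻¹)) ^ (q : ℝ) :=
    Real.rpow_le_rpow (by linarith) (hK q hqK) (by positivity)
  rw [← Real.rpow_mul (hMpos q).le, inv_mul_cancel₀ hq0, Real.rpow_one,
    Real.rpow_natCast] at h1
  have h2 : s ^ q ≤ (s + 1) ^ q := pow_le_pow_left₀ hs (by linarith) q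
  have h3 : s ^ q / M q ≤ 1 := (div_le_one (hMpos q)).mpr (le_trans h2 h1)
  exact Real.log_nonpos (div_nonneg (pow_nonneg hs q) (hMpos q).le) h3

lemma assocFun_zero {M : ℕ → ℝ} (hM0 : M 0 = 1) : assocFun M 0 = 0 := by
  have h : ∀ p : ℕ, Real.log ((0:ℝ) ^ p / M p) = 0 := by
    intro p
    cases p with
    | zero => simp [hM0]
    | succ k => simp [zero_pow (Nat.succ_ne_zero k)]
  unfold assocFun
  rw [show (fun p : ℕ => Real.log ((0:ℝ) ^ p / M p)) = fun _ => (0:ℝ) from funext h]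
  exact ciSup_const

/-- For positive sequences `M, N` with `M 0 = N 0 = 1`, both log-convex (M.1),
with `(M p)^(1/p) → ∞` and `(N p)^(1/p) → ∞`: `N ⊂ M` (i.e. `N p ≤ C L^p M p`)
iff `ω_M(t) ≤ ω_N(L' t) + log C'` for suitable constants. -/
theorem subset_iff_assocFun (M N : ℕ → ℝ)
    (hMpos : ∀ p, 0 < M p) (hNpos : ∀ p, 0 < N p)
    (hM0 : M 0 = 1) (hN0 : N 0 = 1)
    (hM1 : ∀ p, 1 ≤ p → (M p) ^ 2 ≤ M (p - 1) * M (p + 1))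
    (hN1 : ∀ p, 1 ≤ p → (N p) ^ 2 ≤ N (p - 1) * N (p + 1))
    (hMlim : Tendsto (fun p : ℕ => (M p) ^ ((p : ℝ)⁻¹)) atTop atTop)
    (hNlim : Tendsto (fun p : ℕ => (N p) ^ ((p : ℝ)⁻¹)) atTop atTop) :
    (∃ C L : ℝ, 0 < C ∧ 0 < L ∧ ∀ p : ℕ, N p ≤ C * L ^ p * M p) ↔
      (∃ C' L' : ℝ, 0 < C' ∧ 0 < L' ∧
        ∀ t : ℝ, 0 ≤ t → assocFun M t ≤ assocFun N (L' * t) + Real.log C') := by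
  constructor
  · rintro ⟨C, L, hC, hL, h⟩
    refine ⟨max C 1, L, lt_max_of_lt_right one_pos, hL, ?_⟩
    intro t ht
    rcases eq_or_lt_of_le ht with h0 | htpos
    · rw [← h0, assocFun_zero hM0, mul_zero, assocFun_zero hN0, zero_add]
      exact Real.log_nonneg (le_max_right _ _)
    · have hBN := bddAbove_assoc_aux hNpos hNlim (s := L * t) (by positivity)
      apply ciSup_le
      intro p
      have hCp : N p ≤ max C 1 * L ^ p * M p := by
        refine le_trans (h p) ?_
        have h3 : C ≤ max C 1 := le_max_left _ _
        have := mul_le_mul_of_nonneg_right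
          (mul_le_mul_of_nonneg_right h3 (pow_pos hL p).le) (hMpos p).le
        linarith
      have key : t ^ p / M p ≤ max C 1 * ((L * t) ^ p / N p) := by
        have hrw : max C 1 * ((L * t) ^ p / N p)
            = (max C 1 * L ^ p * t ^ p) / N p := by rw [mul_pow]; ring
        rw [hrw, div_le_div_iff₀ (hMpos p) (hNpos p)]
        calc t ^ p * N p = N p * t ^ p := by ring
          _ ≤ (max C 1 * L ^ p * M p) * t ^ p :=
              mul_le_mul_of_nonneg_right hCp (pow_nonneg ht p)
          _ = max C 1 * L ^ p * t ^ p * M p := by ring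
      have hlog : Real.log (t ^ p / M p)
          ≤ Real.log (max C 1) + Real.log ((L * t) ^ p / N p) := by
        calc Real.log (t ^ p / M p)
            ≤ Real.log (max C 1 * ((L * t) ^ p / N p)) := by
              apply (Real.log_le_log_iff (div_pos (pow_pos htpos p) (hMpos p))
                (mul_pos (lt_max_of_lt_right one_pos)
                  (div_pos (pow_pos (mul_pos hL htpos) p) (hNpos p)))).mpr key
          _ = Real.log (max C 1) + Real.log ((L * t) ^ p / N p) :=
              Real.log_mul (ne_of_gt (lt_max_of_lt_right one_pos))
                (ne_of_gt (div_pos (pow_pos (mul_pos hL htpos) p) (hNpos p)))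
      have hsup : Real.log ((L * t) ^ p / N p) ≤ assocFun N (L * t) :=
        le_ciSup hBN p
      unfold assocFun at hsup ⊢
      linarith
  · rintro ⟨C', L', hC', hL', h⟩
    refine ⟨max C' 1, L', lt_max_of_lt_right one_pos, hL', ?_⟩
    intro p
    rcases Nat.eq_zero_or_pos p with rfl | hp
    · simp only [hN0, hM0, pow_zero, mul_one]
      exact le_max_right _ _
    obtain ⟨k, rfl⟩ : ∃ k, p = k + 1 := ⟨p - 1, (Nat.succ_pred_eq_of_pos hp).symm⟩
    set p := k + 1 with hpdef
    -- ratio sequence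
    set r : ℕ → ℝ := fun a => N (a + 1) / N a with hr
    have hrpos : ∀ a, 0 < r a := fun a => div_pos (hNpos _) (hNpos a)
    have hrmono : Monotone r := by
      apply monotone_nat_of_le_succ
      intro a
      have := hN1 (a + 1) (Nat.le_add_left 1 a)
      simp only [Nat.add_sub_cancel] at this
      rw [hr]
      rw [div_le_div_iff₀ (hNpos a) (hNpos (a + 1))]
      nlinarith [hNpos a, hNpos (a + 1), hNpos (a + 2)]
    set n : ℝ := r k with hn
    have hnpos : 0 < n := hrpos k
    have hNsucc : ∀ a, N (a + 1) = r a * N a := by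
      intro a
      rw [hr]
      exact (div_mul_cancel₀ _ (hNpos a).ne').symm
    -- A : for j, n^j * N p ≤ N (p + j)
    have hA : ∀ j : ℕ, n ^ j * N p ≤ N (p + j) := by
      intro j
      induction j with
      | zero => simp
      | succ j ih =>
        have h1 : n ≤ r (p + j) := hrmono (by omega)
        calc n ^ (j + 1) * N p = n * (n ^ j * N p) := by ring
          _ ≤ n * N (p + j) := by
              exact mul_le_mul_of_nonneg_left ih hnpos.le
          _ ≤ r (p + j) * N (p + j) :=
              mul_le_mul_of_nonneg_right h1 (hNpos _).le
          _ = N (p + j + 1) := (hNsucc _).symm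
    -- B : for j ≤ p, N p ≤ n^j * N (p - j)
    have hB : ∀ j : ℕ, j ≤ p → N p ≤ n ^ j * N (p - j) := by
      intro j
      induction j with
      | zero => simp
      | succ j ih =>
        intro hj
        have hjp : j ≤ p := by omega
        have ih' := ih hjp
        obtain ⟨m, hm⟩ : ∃ m, p - j = m + 1 := ⟨p - j - 1, by omega⟩
        have hmk : m ≤ k := by omega
        have h1 : r m ≤ n := hrmono hmk
        have h2 : N (p - j) ≤ n * N m := by
          rw [hm, hNsucc m]
          exact mul_le_mul_of_nonneg_right h1 (hNpos m).le
        have hm' : p - (j + 1) = m := by omega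
        calc N p ≤ n ^ j * N (p - j) := ih'
          _ ≤ n ^ j * (n * N m) := mul_le_mul_of_nonneg_left h2 (by positivity)
          _ = n ^ (j + 1) * N (p - (j + 1)) := by rw [hm']; ring
    -- κ : ∀ q, n^q * N p ≤ n^p * N q
    have hκ : ∀ q : ℕ, n ^ q * N p ≤ n ^ p * N q := by
      intro q
      rcases le_or_gt q p with hq | hq
      · have := hB (p - q) (Nat.sub_le _ _)
        have hq' : p - (p - q) = q := by omega
        rw [hq'] at this
        calc n ^ q * N p ≤ n ^ q * (n ^ (p - q) * N q) :=
              mul_le_mul_of_nonneg_left this (pow_pos hnpos q).le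
          _ = n ^ (q + (p - q)) * N q := by rw [pow_add]; ring
          _ = n ^ p * N q := by congr 2; omega
      · have := hA (q - p)
        have hq' : p + (q - p) = q := by omega
        rw [hq'] at this
        have hqq : n ^ q = n ^ p * n ^ (q - p) := by
          rw [← pow_add]; congr 1; omega
        calc n ^ q * N p = n ^ p * (n ^ (q - p) * N p) := by rw [hqq]; ring
          _ ≤ n ^ p * N q := mul_le_mul_of_nonneg_left this (pow_pos hnpos p).le
    -- ω_N(n) ≤ log (n^p / N p)
    have hωN : assocFun N n ≤ Real.log (n ^ p / N p) := by
      apply ciSup_le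
      intro q
      apply (Real.log_le_log_iff (div_pos (pow_pos hnpos q) (hNpos q))
        (div_pos (pow_pos hnpos p) (hNpos p))).mpr
      rw [div_le_div_iff₀ (hNpos q) (hNpos p)]
      exact hκ q
    -- use hypothesis at t = n / L'
    have hs : (0:ℝ) ≤ n / L' := (div_pos hnpos hL').le
    have hM := h (n / L') hs
    rw [mul_div_cancel₀ n (ne_of_gt hL')] at hM
    have hterm : Real.log ((n / L') ^ p / M p) ≤ assocFun M (n / L') :=
      le_ciSup (bddAbove_assoc_aux hMpos hMlim hs) p
    have hfinal : Real.log ((n / L') ^ p / M p)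
        ≤ Real.log (C' * (n ^ p / N p)) := by
      rw [Real.log_mul (ne_of_gt hC')
        (ne_of_gt (div_pos (pow_pos hnpos p) (hNpos p)))]
      linarith
    have hineq : (n / L') ^ p / M p ≤ C' * (n ^ p / N p) :=
      (Real.log_le_log_iff
        (div_pos (pow_pos (div_pos hnpos hL') p) (hMpos p))
        (mul_pos hC' (div_pos (pow_pos hnpos p) (hNpos p)))).mp hfinal
    have hnp : (0:ℝ) < n ^ p := pow_pos hnpos p
    have hkey : N p ≤ C' * L' ^ p * M p := by
      have e1 : (n / L') ^ p / M p = n ^ p / (L' ^ p * M p) := by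
        rw [div_pow, div_div]
      have e2 : C' * (n ^ p / N p) = C' * n ^ p / N p := by ring
      rw [e1, e2, div_le_div_iff₀ (mul_pos (pow_pos hL' p) (hMpos p)) (hNpos p)]
        at hineq
      have e3 : C' * n ^ p * (L' ^ p * M p) = n ^ p * (C' * (L' ^ p * M p)) := by
        ring
      have h2 : n ^ p * N p ≤ n ^ p * (C' * (L' ^ p * M p)) := by linarith
      have h3 := le_of_mul_le_mul_left h2 hnp
      have e4 : C' * (L' ^ p * M p) = C' * L' ^ p * M p := by ring
      linarith
    calc N p ≤ C' * L' ^ p * M p := hkey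
      _ ≤ max C' 1 * L' ^ p * M p := by
          apply mul_le_mul_of_nonneg_right _ (hMpos p).le
          exact mul_le_mul_of_nonneg_right (le_max_left _ _) (pow_pos hL' p).le
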